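/- There is an absolute constant C > 0 such that for every prime p and all integers K, L, M, N ≥ 1 for which the intervals I = [K+1, K+M] and J = [L+1, L+N] are contained in [1, p-1], one has |∑_{m∈I} ∑_{n∈J} K_p(mn, 1)| ≤ C ∑_{x=1}^{p-1} min{M, p/‖x‖_p} · min{N, p/‖x̄‖_p}. -/

import Mathlib

/-! Substituting `x ↦ x n̄` turns `K_p(mn, 1)` into `∑_x e_p(mx) e_p(n x̄)`, so the double sum
factors, for each unit `x`, into a product of two incomplete geometric sums with ratios `e_p(x)`
and `e_p(x̄)`. A geometric sum of ratio `e_p(y)` is bounded by its length and by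
`2 / |e_p(y) - 1| = 1 / |sin(π y / p)| ≤ p / (2‖y‖_p)` (Jordan's inequality), so `C = 1` works. -/

/-- `e_p(z) = exp(2πiz/p)`. -/
noncomputable def ep (p : ℕ) (z : ℤ) : ℂ := Complex.exp (2 * Real.pi * Complex.I * z / p)

/-- the multiplicative inverse of `x` modulo `p`, as a natural number -/
def pinv (p x : ℕ) : ℕ := ((x : ZMod p)⁻¹).val

/-- the Kloosterman sum `K_p(m,n) = ∑_{x=1}^{p-1} e_p(m x + n x̄)` -/
noncomputable def Kl (p : ℕ) (m n : ℤ) : ℂ :=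
  ∑ x ∈ Finset.Icc 1 (p - 1), ep p (m * x + n * (pinv p x : ℤ))

/-- `‖u‖_p`: the distance from `u` to the nearest multiple of `p` -/
def dp (p : ℕ) (u : ℤ) : ℕ := min (u % p).toNat (p - (u % p).toNat)

open Finset Real ZMod

lemma natCast_zmod_ne_zero_of_pos_of_lt {p n : ℕ} (h0 : 0 < n) (hn : n < p) :
    (n : ZMod p) ≠ 0 := by
  rw [Ne, ZMod.natCast_eq_zero_iff]
  exact Nat.not_dvd_of_pos_of_lt h0 hn

lemma ep_eq_stdAddChar (p : ℕ) [NeZero p] (z : ℤ) : ep p z = stdAddChar (z : ZMod p) :=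
  (stdAddChar_coe z).symm

lemma pinv_val {p : ℕ} [NeZero p] (a : ZMod p) : pinv p a.val = a⁻¹.val := by
  rw [pinv, ZMod.natCast_zmod_val]

lemma dp_natCast_of_lt {p y : ℕ} (hy : y < p) : dp p y = min y (p - y) := by
  have : (y : ℤ) % p = y := Int.emod_eq_of_lt (by positivity) (by exact_mod_cast hy)
  simp [dp, this]

lemma sum_Icc_one_sub_one_eq_sum_units {p : ℕ} [Fact p.Prime] {β : Type*} [AddCommMonoid β]
    (f : ℕ → β) : ∑ x ∈ Icc 1 (p - 1), f x = ∑ u : (ZMod p)ˣ, f (u : ZMod p).val := by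
  symm
  refine sum_bij (fun u _ => (u : ZMod p).val) (fun u _ => ?_) (fun u _ v _ huv => ?_)
    (fun x hx => ?_) (fun _ _ => rfl)
  · have := ZMod.val_lt (u : ZMod p)
    have := (ZMod.val_pos (n := p)).2 u.ne_zero
    rw [mem_Icc]
    omega
  · exact Units.ext (ZMod.val_injective p huv)
  · have hx' := mem_Icc.1 hx
    have hxp : x < p := by have := (Fact.out : p.Prime).pos; omega
    exact ⟨Units.mk0 _ (natCast_zmod_ne_zero_of_pos_of_lt hx'.1 hxp), mem_univ _,
      ZMod.val_cast_of_lt hxp⟩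

lemma Kl_eq_sum_units (p : ℕ) [Fact p.Prime] (a b : ℤ) :
    Kl p a b = ∑ u : (ZMod p)ˣ,
      stdAddChar ((a : ZMod p) * (u : ZMod p) + (b : ZMod p) * (u : ZMod p)⁻¹) := by
  rw [Kl, sum_Icc_one_sub_one_eq_sum_units]
  refine Fintype.sum_congr _ _ fun u => ?_
  rw [pinv_val, ep_eq_stdAddChar]
  push_cast
  simp only [ZMod.natCast_zmod_val]

lemma sum_units_addChar_mul_add_inv {F R : Type*} [Field F] [Fintype Fˣ] [CommSemiring R]
    (ψ : AddChar F R) (a : F) {c : F} (hc : c ≠ 0) :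
    ∑ u : Fˣ, ψ (a * c * u + (u : F)⁻¹) = ∑ u : Fˣ, ψ (a * u) * ψ (c * (u : F)⁻¹) := by
  rw [← Fintype.sum_equiv (Equiv.mulLeft (Units.mk0 c hc)⁻¹) _ _ fun _ => rfl]
  refine Fintype.sum_congr _ _ fun u => ?_
  rw [← AddChar.map_add_eq_mul]
  congr 1
  simp only [Equiv.coe_mulLeft, Units.val_mul, Units.val_inv_eq_inv_val, Units.val_mk0]
  field_simp

lemma sum_sum_Kl_mul_one_eq {p : ℕ} [Fact p.Prime] (s t : Finset ℕ)
    (ht : ∀ n ∈ t, (n : ZMod p) ≠ 0) :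
    ∑ m ∈ s, ∑ n ∈ t, Kl p ((m : ℤ) * n) 1 =
      ∑ u : (ZMod p)ˣ, (∑ m ∈ s, stdAddChar ((m : ZMod p) * (u : ZMod p))) *
        ∑ n ∈ t, stdAddChar ((n : ZMod p) * (u : ZMod p)⁻¹) := by
  have hKl : ∀ m : ℕ, ∀ n ∈ t, Kl p ((m : ℤ) * n) 1 = ∑ u : (ZMod p)ˣ,
      stdAddChar ((m : ZMod p) * (u : ZMod p)) *
        stdAddChar ((n : ZMod p) * (u : ZMod p)⁻¹) :=
    fun m n hn => by
      rw [Kl_eq_sum_units, ← sum_units_addChar_mul_add_inv _ _ (ht n hn)]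
      push_cast
      simp only [one_mul]
  simp_rw [sum_mul_sum]
  exact (sum_congr rfl fun m _ => (sum_congr rfl (hKl m)).trans sum_comm).trans sum_comm

lemma norm_geom_sum_le_of_norm_eq_one {𝕜 : Type*} [NormedDivisionRing 𝕜] {z : 𝕜}
    (hz : ‖z‖ = 1) (hz1 : z ≠ 1) (n : ℕ) : ‖∑ i ∈ range n, z ^ i‖ ≤ 2 / ‖z - 1‖ := by
  rw [geom_sum_eq hz1, norm_div]
  gcongr
  calc ‖z ^ n - 1‖ ≤ ‖z ^ n‖ + ‖(1 : 𝕜)‖ := norm_sub_le _ _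
    _ = 2 := by rw [norm_pow, hz, one_pow, norm_one]; norm_num

lemma sum_Icc_pow_eq_mul_geom_sum {R : Type*} [Semiring R] (z : R) (K M : ℕ) :
    ∑ m ∈ Icc (K + 1) (K + M), z ^ m = z ^ (K + 1) * ∑ i ∈ range M, z ^ i := by
  rw [← Ico_add_one_right_eq_Icc, sum_Ico_eq_sum_range, mul_sum,
    show K + M + 1 - (K + 1) = M by omega]
  simp_rw [pow_add]

lemma two_mul_div_le_sin_pi_mul_div {d N : ℕ} (hd : 2 * d ≤ N) :
    2 * (d : ℝ) / N ≤ sin (π * d / N) := by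
  rcases Nat.eq_zero_or_pos N with rfl | hN
  · simp
  have hN' : (0 : ℝ) < N := by exact_mod_cast hN
  have harg : π * d / N ≤ π / 2 := by
    rw [div_le_div_iff₀ hN' two_pos]
    have : (2 * d : ℝ) ≤ N := by exact_mod_cast hd
    nlinarith [pi_pos]
  calc 2 * (d : ℝ) / N = 2 / π * (π * d / N) := by field_simp
    _ ≤ sin (π * d / N) := mul_le_sin (by positivity) harg

lemma two_mul_dp_div_le_abs_sin {N y : ℕ} (hy : y < N) :
    2 * (dp N y : ℝ) / N ≤ |sin (π * y / N)| := by
  rw [dp_natCast_of_lt hy]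
  rcases min_choice y (N - y) with h | h <;> rw [h]
  · exact (two_mul_div_le_sin_pi_mul_div (by omega)).trans (le_abs_self _)
  · have hsym : sin (π * y / N) = sin (π * (N - y : ℕ) / N) := by
      have hN : (N : ℝ) ≠ 0 := Nat.cast_ne_zero.2 (by omega)
      rw [← sin_pi_sub, Nat.cast_sub hy.le]
      congr 1
      field_simp
    rw [hsym]
    exact (two_mul_div_le_sin_pi_mul_div (by omega)).trans (le_abs_self _)

lemma norm_stdAddChar {N : ℕ} [NeZero N] (a : ZMod N) : ‖stdAddChar a‖ = 1 :=
  Circle.norm_coe _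

lemma norm_stdAddChar_sub_one {N : ℕ} [NeZero N] (a : ZMod N) :
    ‖stdAddChar a - 1‖ = 2 * |sin (π * a.val / N)| := by
  rw [stdAddChar_apply, ZMod.toCircle_apply,
    show 2 * π * Complex.I * a.val / N = Complex.I * ((2 * π * a.val / N : ℝ) : ℂ) by
      push_cast; ring,
    Complex.norm_exp_I_mul_ofReal_sub_one, norm_mul, Real.norm_two, Real.norm_eq_abs]
  congr 3
  ring

theorem norm_sum_Icc_stdAddChar_mul_le {N : ℕ} [NeZero N] {a : ZMod N} (ha : a ≠ 0) (K M : ℕ) :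
    ‖∑ m ∈ Icc (K + 1) (K + M), stdAddChar ((m : ZMod N) * a)‖ ≤
      min (M : ℝ) (N / dp N a.val) := by
  have hpow : ∀ m : ℕ, stdAddChar ((m : ZMod N) * a) = stdAddChar a ^ m := fun m => by
    rw [← nsmul_eq_mul, AddChar.map_nsmul_eq_pow]
  set z := stdAddChar a
  have hz : ‖z‖ = 1 := norm_stdAddChar a
  simp only [hpow, sum_Icc_pow_eq_mul_geom_sum, norm_mul, norm_pow, hz, one_pow, one_mul]
  refine le_min ?_ ?_
  · calc ‖∑ i ∈ range M, z ^ i‖ ≤ ∑ i ∈ range M, ‖z ^ i‖ := norm_sum_le _ _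
      _ = M := by simp [hz]
  · have hN : (0 : ℝ) < N := by exact_mod_cast (NeZero.pos N)
    have hdp : (0 : ℝ) < dp N a.val := by
      rw [dp_natCast_of_lt (ZMod.val_lt a)]
      have := (ZMod.val_pos (n := N)).2 ha
      have := ZMod.val_lt a
      exact_mod_cast (by omega : 0 < min a.val (N - a.val))
    have hsin := two_mul_dp_div_le_abs_sin (ZMod.val_lt a)
    have hz1 : 0 < ‖z - 1‖ := by
      rw [norm_stdAddChar_sub_one]
      have : 0 < 2 * (dp N a.val : ℝ) / N := by positivity
      linarith
    calc ‖∑ i ∈ range M, z ^ i‖ ≤ 2 / ‖z - 1‖ :=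
          norm_geom_sum_le_of_norm_eq_one hz (sub_ne_zero.1 (norm_pos_iff.1 hz1)) M
      _ ≤ 2 / (2 * (2 * dp N a.val / N)) := by
          rw [norm_stdAddChar_sub_one]
          gcongr
      _ ≤ N / dp N a.val := by
          rw [div_le_div_iff₀ (by positivity) hdp]
          field_simp
          nlinarith

theorem bilinear_Kloosterman_completion_bound :
    ∃ C : ℝ, 0 < C ∧
      ∀ p K L M N : ℕ, p.Prime → 1 ≤ K → 1 ≤ L → 1 ≤ M → 1 ≤ N →
        K + M ≤ p - 1 → L + N ≤ p - 1 →
        ‖∑ m ∈ Finset.Icc (K + 1) (K + M), ∑ n ∈ Finset.Icc (L + 1) (L + N),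
            Kl p ((m : ℤ) * n) 1‖ ≤
          C * ∑ x ∈ Finset.Icc 1 (p - 1),
            min (M : ℝ) ((p : ℝ) / (dp p x : ℝ)) *
              min (N : ℝ) ((p : ℝ) / (dp p (pinv p x) : ℝ)) := by
  refine ⟨1, one_pos, fun p K L M N hp _ _ _ _ _ hLN => ?_⟩
  have := Fact.mk hp
  have hJ : ∀ n ∈ Icc (L + 1) (L + N), (n : ZMod p) ≠ 0 := fun n hn => by
    rw [mem_Icc] at hn
    exact natCast_zmod_ne_zero_of_pos_of_lt (by omega) (by omega)
  rw [one_mul, sum_sum_Kl_mul_one_eq _ _ hJ, sum_Icc_one_sub_one_eq_sum_units]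
  refine (norm_sum_le _ _).trans (sum_le_sum fun u _ => ?_)
  rw [norm_mul, pinv_val]
  exact mul_le_mul (norm_sum_Icc_stdAddChar_mul_le u.ne_zero K M)
    (norm_sum_Icc_stdAddChar_mul_le (inv_ne_zero u.ne_zero) L N) (norm_nonneg _) (by positivity)
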